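/- If R has constant antiholomorphic sectional curvature ν and satisfies identity 3, then the Ricci tensor S and the ⋆-Ricci tensor S′ satisfy (m+1)S − 3S′ = (1/(2m)){(m+1)τ − 3τ′} g, where τ, τ′ are the traces of S, S′. -/

import Mathlib

open scoped BigOperators InnerProductSpace

variable {V : Type*} [NormedAddCommGroup V] [InnerProductSpace ℝ V]

/-- The tensor `π₁(x,y,z,u) = g(x,u)g(y,z) − g(x,z)g(y,u)`. -/
def pi1 (x y z u : V) : ℝ := ⟪x, u⟫_ℝ * ⟪y, z⟫_ℝ - ⟪x, z⟫_ℝ * ⟪y, u⟫_ℝ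

/-- The tensor `ψ(Q)` associated to a bilinear form `Q` and an almost complex
structure `J`. -/
def psi (J : V →ₗ[ℝ] V) (Q : V → V → ℝ) (x y z u : V) : ℝ :=
  ⟪x, J u⟫_ℝ * Q y (J z) - ⟪x, J z⟫_ℝ * Q y (J u) - 2 * ⟪x, J y⟫_ℝ * Q z (J u)
    + ⟪y, J z⟫_ℝ * Q x (J u) - ⟪y, J u⟫_ℝ * Q x (J z) - 2 * ⟪z, J u⟫_ℝ * Q x (J y)

/-- `π₂ = (1/2) ψ(g)`. -/
noncomputable def pi2 (J : V →ₗ[ℝ] V) (x y z u : V) : ℝ :=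
  (1 / 2) * psi J (fun a b => ⟪a, b⟫_ℝ) x y z u

/-- An algebraic curvature tensor: multilinear (linearity in the first slot,
the others follow from the symmetries), antisymmetric in the first and the
last pairs, symmetric under exchange of the pairs, first Bianchi identity. -/
def IsACT (R : V → V → V → V → ℝ) : Prop :=
  (∀ x x' y z u, R (x + x') y z u = R x y z u + R x' y z u) ∧
  (∀ (c : ℝ) x y z u, R (c • x) y z u = c * R x y z u) ∧
  (∀ x y z u, R x y z u = -R y x z u) ∧
  (∀ x y z u, R x y z u = -R x y u z) ∧
  (∀ x y z u, R x y z u = R z u x y) ∧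
  (∀ x y z u, R x y z u + R y z x u + R z x y u = 0)

/-- Identity 1: `R(X,Y,Z,U) = R(X,Y,JZ,JU)`. -/
def Id1 (J : V →ₗ[ℝ] V) (R : V → V → V → V → ℝ) : Prop :=
  ∀ x y z u, R x y z u = R x y (J z) (J u)

/-- Identity 2: `R(X,Y,Z,U) = R(X,Y,JZ,JU) + R(X,JY,Z,JU) + R(JX,Y,Z,JU)`. -/
def Id2 (J : V →ₗ[ℝ] V) (R : V → V → V → V → ℝ) : Prop :=
  ∀ x y z u, R x y z u = R x y (J z) (J u) + R x (J y) z (J u) + R (J x) y z (J u)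

/-- Identity 3: `R(X,Y,Z,U) = R(JX,JY,JZ,JU)`. -/
def Id3 (J : V →ₗ[ℝ] V) (R : V → V → V → V → ℝ) : Prop :=
  ∀ x y z u, R x y z u = R (J x) (J y) (J z) (J u)

/-!
For an antiholomorphic orthonormal pair `x, u`, the hypothesis on the planes spanned by
`x ± u, J x ∓ J u` and by `x ± J u, J x ∓ u`, together with the Bianchi identity and identity 3,
gives `R(x, u, J u, J x) = (k(x) + k(u) - 2ν) / 6`, where `k(x) = R(x, J x, J x, x)`.
Evaluating `S` and `S'` at a unit vector `p` in an orthonormal basis `(eᵢ)` containing `p` and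
`J p` then gives `(m + 1) S(p, p) - 3 S'(p, p) = 2 (m - 1) (m + 2) ν - (1/2) ∑ᵢ k(eᵢ)`: the
coefficients `m + 1` and `3` are exactly those for which `k(p)` cancels. Two unit vectors `p, q`
spanning an antiholomorphic plane lie in a common such basis, so the symmetric form
`(m + 1) S - 3 S'` takes the same value at both; since `2m > 4`, any two unit vectors have a common
antiholomorphic partner, so the form is constant on the unit sphere, hence a multiple of `g`, and
taking traces identifies the factor.
-/

open Finset Module

namespace IsACT

variable {R : V → V → V → V → ℝ}

theorem add₁ (hR : IsACT R) (x x' y z u : V) : R (x + x') y z u = R x y z u + R x' y z u :=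
  hR.1 x x' y z u

theorem smul₁ (hR : IsACT R) (c : ℝ) (x y z u : V) : R (c • x) y z u = c * R x y z u :=
  hR.2.1 c x y z u

theorem antisymm₁₂ (hR : IsACT R) (x y z u : V) : R x y z u = -R y x z u :=
  hR.2.2.1 x y z u

theorem antisymm₃₄ (hR : IsACT R) (x y z u : V) : R x y z u = -R x y u z :=
  hR.2.2.2.1 x y z u

theorem pair_comm (hR : IsACT R) (x y z u : V) : R x y z u = R z u x y :=
  hR.2.2.2.2.1 x y z u

theorem bianchi (hR : IsACT R) (x y z u : V) : R x y z u + R y z x u + R z x y u = 0 :=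
  hR.2.2.2.2.2 x y z u

theorem swap_swap (hR : IsACT R) (x y z u : V) : R x y z u = R y x u z := by
  rw [hR.antisymm₁₂, hR.antisymm₃₄ y, neg_neg]

theorem self_left (hR : IsACT R) (x z u : V) : R x x z u = 0 := by
  linarith [hR.antisymm₁₂ x x z u]

theorem add₂ (hR : IsACT R) (x y y' z u : V) : R x (y + y') z u = R x y z u + R x y' z u := by
  rw [hR.antisymm₁₂, hR.add₁, hR.antisymm₁₂ y, hR.antisymm₁₂ y']; ring

theorem smul₂ (hR : IsACT R) (c : ℝ) (x y z u : V) : R x (c • y) z u = c * R x y z u := by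
  rw [hR.antisymm₁₂, hR.smul₁, hR.antisymm₁₂ y]; ring

theorem add₃ (hR : IsACT R) (x y z z' u : V) : R x y (z + z') u = R x y z u + R x y z' u := by
  rw [hR.pair_comm, hR.add₁, hR.pair_comm z, hR.pair_comm z']

theorem smul₃ (hR : IsACT R) (c : ℝ) (x y z u : V) : R x y (c • z) u = c * R x y z u := by
  rw [hR.pair_comm, hR.smul₁, hR.pair_comm z]

theorem add₄ (hR : IsACT R) (x y z u u' : V) : R x y z (u + u') = R x y z u + R x y z u' := by
  rw [hR.antisymm₃₄, hR.add₃, hR.antisymm₃₄ _ _ u, hR.antisymm₃₄ _ _ u']; ring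

theorem smul₄ (hR : IsACT R) (c : ℝ) (x y z u : V) : R x y z (c • u) = c * R x y z u := by
  rw [hR.antisymm₃₄, hR.smul₃, hR.antisymm₃₄ _ _ u]; ring

theorem neg₁ (hR : IsACT R) (x y z u : V) : R (-x) y z u = -R x y z u := by
  simpa using hR.smul₁ (-1) x y z u

theorem neg₂ (hR : IsACT R) (x y z u : V) : R x (-y) z u = -R x y z u := by
  simpa using hR.smul₂ (-1) x y z u

theorem neg₃ (hR : IsACT R) (x y z u : V) : R x y (-z) u = -R x y z u := by
  simpa using hR.smul₃ (-1) x y z u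

theorem neg₄ (hR : IsACT R) (x y z u : V) : R x y z (-u) = -R x y z u := by
  simpa using hR.smul₄ (-1) x y z u

end IsACT

theorem OrthonormalBasis.sum_bilin_diag_eq {ι κ : Type*} [Fintype ι] [Fintype κ]
    (B : V →ₗ[ℝ] V →ₗ[ℝ] ℝ) (b : OrthonormalBasis ι ℝ V) (c : OrthonormalBasis κ ℝ V) :
    ∑ i, B (b i) (b i) = ∑ k, B (c k) (c k) :=
  calc ∑ i, B (b i) (b i) = ∑ i, ∑ k, ⟪b i, c k⟫_ℝ * B (b i) (c k) := by
        refine sum_congr rfl fun i _ => ?_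
        nth_rw 2 [← c.sum_repr' (b i)]
        simp only [map_sum, map_smul, smul_eq_mul, real_inner_comm]
    _ = ∑ k, B (c k) (c k) := by
        rw [sum_comm]
        refine sum_congr rfl fun k _ => ?_
        nth_rw 3 [← b.sum_repr' (c k)]
        simp only [map_sum, map_smul, LinearMap.sum_apply, LinearMap.smul_apply, smul_eq_mul]

theorem exists_norm_eq_one_forall_inner_eq_zero [FiniteDimensional ℝ V] {k : ℕ} (v : Fin k → V)
    (hk : k < finrank ℝ V) : ∃ w : V, ‖w‖ = 1 ∧ ∀ i, ⟪v i, w⟫_ℝ = 0 := by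
  have hK : (Submodule.span ℝ (Set.range v))ᗮ ≠ ⊥ := by
    rw [Ne, Submodule.orthogonal_eq_bot_iff]
    intro htop
    have := finrank_range_le_card (R := ℝ) v
    rw [Set.finrank, htop, finrank_top, Fintype.card_fin] at this
    omega
  obtain ⟨w, hwK, hw⟩ := Submodule.exists_mem_ne_zero_of_ne_bot hK
  refine ⟨(‖w‖⁻¹ : ℝ) • w, norm_smul_inv_norm hw, fun i => ?_⟩
  rw [real_inner_smul_right, Submodule.inner_right_of_mem_orthogonal
    (Submodule.subset_span (Set.mem_range_self i)) hwK, mul_zero]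

theorem LinearMap.eq_mul_inner_of_forall_norm_eq_one (B : V →ₗ[ℝ] V →ₗ[ℝ] ℝ)
    (hB : ∀ x y, B x y = B y x) {c : ℝ} (hc : ∀ x, ‖x‖ = 1 → B x x = c) (x y : V) :
    B x y = c * ⟪x, y⟫_ℝ := by
  have hdiag : ∀ x, B x x = c * ⟪x, x⟫_ℝ := by
    intro x
    rcases eq_or_ne x 0 with rfl | hx
    · simp
    have hx' : ‖x‖ ≠ 0 := norm_ne_zero_iff.mpr hx
    have := hc _ (norm_smul_inv_norm (𝕜 := ℝ) hx)
    simp only [map_smul, LinearMap.smul_apply, smul_eq_mul, RCLike.ofReal_real_eq_id, id_eq] at this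
    rw [real_inner_self_eq_norm_sq]
    field_simp at this
    linarith
  have hpol := hdiag (x + y)
  simp only [map_add, LinearMap.add_apply, hdiag, inner_add_left, inner_add_right, hB y x,
    real_inner_comm x y] at hpol
  linarith

section ComplexStructure

variable {J : V →ₗ[ℝ] V}

theorem inner_J_left (hJ2 : ∀ x, J (J x) = -x) (hJiso : ∀ x y, ⟪J x, J y⟫_ℝ = ⟪x, y⟫_ℝ)
    (x y : V) : ⟪J x, y⟫_ℝ = -⟪x, J y⟫_ℝ := by
  rw [← hJiso x (J y), hJ2, inner_neg_right, neg_neg]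

theorem inner_self_J (hJ2 : ∀ x, J (J x) = -x) (hJiso : ∀ x y, ⟪J x, J y⟫_ℝ = ⟪x, y⟫_ℝ)
    (x : V) : ⟪x, J x⟫_ℝ = 0 := by
  have h := inner_J_left hJ2 hJiso x x
  rw [real_inner_comm] at h
  linarith

theorem norm_J (hJiso : ∀ x y, ⟪J x, J y⟫_ℝ = ⟪x, y⟫_ℝ) (x : V) : ‖J x‖ = ‖x‖ := by
  rw [← sq_eq_sq₀ (norm_nonneg _) (norm_nonneg _), ← real_inner_self_eq_norm_sq,
    ← real_inner_self_eq_norm_sq, hJiso]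

end ComplexStructure

def holomorphicCurvature (J : V →ₗ[ℝ] V) (R : V → V → V → V → ℝ) (x : V) : ℝ :=
  R x (J x) (J x) x

def HasConstAntiholomorphicCurvature (J : V →ₗ[ℝ] V) (R : V → V → V → V → ℝ) (ν : ℝ) : Prop :=
  ∀ x y : V, ‖x‖ = 1 → ‖y‖ = 1 → ⟪x, y⟫_ℝ = 0 → ⟪x, J y⟫_ℝ = 0 → R x y y x = ν

section Curvature

variable {J : V →ₗ[ℝ] V} {R : V → V → V → V → ℝ} {ν : ℝ}

theorem holomorphicCurvature_J (hR : IsACT R) (hJ2 : ∀ x, J (J x) = -x) (x : V) :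
    holomorphicCurvature J R (J x) = holomorphicCurvature J R x := by
  rw [holomorphicCurvature, holomorphicCurvature, hJ2, hR.neg₂, hR.neg₃, neg_neg, hR.swap_swap]

theorem Id3.apply_J_J (h3 : Id3 J R) (hR : IsACT R) (hJ2 : ∀ x, J (J x) = -x) (x y z u : V) :
    R x y (J z) (J u) = R (J x) (J y) z u := by
  rw [h3, hJ2, hJ2, hR.neg₃, hR.neg₄, neg_neg]

theorem Id3.bianchi_J (h3 : Id3 J R) (hR : IsACT R) (hJ2 : ∀ x, J (J x) = -x) (x u : V) :
    R x u (J x) (J u) - R x (J u) (J x) u = R x (J x) u (J u) := by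
  have := hR.bianchi x (J x) (J u) u
  rw [hR.antisymm₃₄ x (J x), ← h3.apply_J_J hR hJ2, hR.antisymm₁₂ (J u)] at this
  linarith

namespace HasConstAntiholomorphicCurvature

theorem apply_eq (hν : HasConstAntiholomorphicCurvature J R ν) (hR : IsACT R) {x u : V}
    (hxu : ⟪x, u⟫_ℝ = 0) (hxJu : ⟪x, J u⟫_ℝ = 0) : R x u u x = ν * (‖x‖ ^ 2 * ‖u‖ ^ 2) := by
  rcases eq_or_ne x 0 with rfl | hx
  · simpa using hR.smul₁ 0 0 u u 0
  rcases eq_or_ne u 0 with rfl | hu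
  · simpa using hR.smul₂ 0 x 0 0 x
  have hx' : ‖x‖ ≠ 0 := norm_ne_zero_iff.mpr hx
  have hu' : ‖u‖ ≠ 0 := norm_ne_zero_iff.mpr hu
  have h := hν _ _ (norm_smul_inv_norm (𝕜 := ℝ) hx) (norm_smul_inv_norm (𝕜 := ℝ) hu)
    (by simp [real_inner_smul_left, real_inner_smul_right, hxu])
    (by simp [real_inner_smul_left, real_inner_smul_right, hxJu])
  simp only [hR.smul₁, hR.smul₂, hR.smul₃, hR.smul₄, RCLike.ofReal_real_eq_id, id_eq] at h
  field_simp at h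
  linarith

theorem holomorphicCurvature_add (hν : HasConstAntiholomorphicCurvature J R ν) (hR : IsACT R)
    (hJ2 : ∀ x, J (J x) = -x) (hJiso : ∀ x y, ⟪J x, J y⟫_ℝ = ⟪x, y⟫_ℝ) {x u : V}
    (hx : ‖x‖ = 1) (hu : ‖u‖ = 1) (hxu : ⟪x, u⟫_ℝ = 0) (hxJu : ⟪x, J u⟫_ℝ = 0) :
    holomorphicCurvature J R x + holomorphicCurvature J R u
      + 2 * R x (J x) u (J u) - 2 * R x (J u) (J x) u = 2 * ν := by
  have hux : ⟪u, x⟫_ℝ = 0 := by rw [real_inner_comm]; exact hxu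
  have huJx : ⟪u, J x⟫_ℝ = 0 := by
    rw [← neg_eq_zero, ← inner_J_left hJ2 hJiso, real_inner_comm, hxJu]
  have hnorm : ∀ v : V, ‖v‖ ^ 2 = ⟪v, v⟫_ℝ := fun v => (real_inner_self_eq_norm_sq v).symm
  have hinner := fun v w : V => inner_J_left hJ2 hJiso v w
  have h₁ := hν.apply_eq hR (x := x + u) (u := J x - J u)
    (by simp [inner_add_left, inner_sub_right, inner_self_J hJ2 hJiso, hxJu, huJx])
    (by simp [inner_add_left, inner_add_right, hJ2, hxu, hux, hx, hu])
  have h₂ := hν.apply_eq hR (x := x - u) (u := J x + J u)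
    (by simp [inner_sub_left, inner_add_right, inner_self_J hJ2 hJiso, hxJu, huJx])
    (by simp [inner_sub_left, inner_add_right, hJ2, hxu, hux, hx, hu])
  have hnJx : ‖J x‖ = 1 := by rw [norm_J hJiso, hx]
  have hnJu : ‖J u‖ = 1 := by rw [norm_J hJiso, hu]
  simp only [hnorm, inner_add_left, inner_add_right, inner_sub_left, inner_sub_right, hinner,
    hJ2, inner_neg_right, neg_neg, hxu, hux] at h₁ h₂
  simp only [← hnorm, hx, hu] at h₁ h₂
  simp only [sub_eq_add_neg, hR.add₁, hR.add₂, hR.add₃, hR.add₄,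
    hR.neg₁, hR.neg₂, hR.neg₃, hR.neg₄] at h₁ h₂
  have e₁ : R x (J u) (J u) x = ν := hν x (J u) hx hnJu hxJu (by simp [hJ2, hxu])
  have e₂ : R u (J x) (J x) u = ν := hν u (J x) hu hnJx huJx (by simp [hJ2, hux])
  have e₃ := hR.antisymm₃₄ x (J x) (J u) u
  have e₄ : R u (J x) (J u) x = R x (J u) (J x) u := by rw [hR.pair_comm, hR.swap_swap]
  have e₅ : R u (J u) (J x) x = R x (J x) (J u) u := by rw [hR.pair_comm, hR.swap_swap]
  simp only [holomorphicCurvature]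
  linarith

theorem apply_J_J_eq_holomorphicCurvature (hν : HasConstAntiholomorphicCurvature J R ν)
    (hR : IsACT R) (h3 : Id3 J R) (hJ2 : ∀ x, J (J x) = -x)
    (hJiso : ∀ x y, ⟪J x, J y⟫_ℝ = ⟪x, y⟫_ℝ) {x u : V}
    (hx : ‖x‖ = 1) (hu : ‖u‖ = 1) (hxu : ⟪x, u⟫_ℝ = 0) (hxJu : ⟪x, J u⟫_ℝ = 0) :
    R x u (J u) (J x)
      = (holomorphicCurvature J R x + holomorphicCurvature J R u - 2 * ν) / 6 := by
  have h₁ := hν.holomorphicCurvature_add hR hJ2 hJiso hx hu hxu hxJu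
  -- the same identity for the antiholomorphic pair `(x, J u)`
  have h₂ := hν.holomorphicCurvature_add hR hJ2 hJiso hx (by rw [norm_J hJiso, hu]) hxJu
    (by rw [hJ2, inner_neg_right, hxu, neg_zero])
  rw [holomorphicCurvature_J hR hJ2, hJ2, hR.neg₂, hR.neg₄, ← hR.antisymm₃₄] at h₂
  have h₃ := h3.bianchi_J hR hJ2 x u
  have h₄ := hR.antisymm₃₄ x u (J u) (J x)
  linarith

end HasConstAntiholomorphicCurvature

end Curvature

theorem Fintype.sum_eq_sum_add_of_eq_off_pair {ι M : Type*} [Fintype ι] [AddCommGroup M]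
    {f g : ι → M} {a a' : ι} (h : a ≠ a') (hfg : ∀ i, i ≠ a → i ≠ a' → f i = g i) :
    ∑ i, f i = ∑ i, g i + (f a - g a) + (f a' - g a') := by
  have := Fintype.sum_eq_add (f := f - g) a a' h fun i hi => sub_eq_zero.mpr (hfg i hi.1 hi.2)
  simp only [Pi.sub_apply, Finset.sum_sub_distrib, sub_eq_iff_eq_add] at this
  rw [this]
  abel

namespace IsACT

variable {ι κ : Type*} [Fintype ι] [Fintype κ] {R : V → V → V → V → ℝ}

noncomputable def ricci (hR : IsACT R) (b : OrthonormalBasis ι ℝ V) : V →ₗ[ℝ] V →ₗ[ℝ] ℝ :=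
  LinearMap.mk₂ ℝ (fun y z => ∑ i, R (b i) y z (b i))
    (fun y y' z => by simp only [hR.add₂, sum_add_distrib])
    (fun c y z => by simp only [hR.smul₂, smul_eq_mul, mul_sum])
    (fun y z z' => by simp only [hR.add₃, sum_add_distrib])
    (fun c y z => by simp only [hR.smul₃, smul_eq_mul, mul_sum])

noncomputable def starRicci (hR : IsACT R) (J : V →ₗ[ℝ] V) (b : OrthonormalBasis ι ℝ V) :
    V →ₗ[ℝ] V →ₗ[ℝ] ℝ :=
  LinearMap.mk₂ ℝ (fun y z => ∑ i, R y (b i) (J (b i)) (J z))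
    (fun y y' z => by simp only [hR.add₁, sum_add_distrib])
    (fun c y z => by simp only [hR.smul₁, smul_eq_mul, mul_sum])
    (fun y z z' => by simp only [map_add, hR.add₄, sum_add_distrib])
    (fun c y z => by simp only [map_smul, hR.smul₄, smul_eq_mul, mul_sum])

theorem ricci_apply (hR : IsACT R) (b : OrthonormalBasis ι ℝ V) (y z : V) :
    hR.ricci b y z = ∑ i, R (b i) y z (b i) := rfl

theorem starRicci_apply (hR : IsACT R) (J : V →ₗ[ℝ] V) (b : OrthonormalBasis ι ℝ V) (y z : V) :
    hR.starRicci J b y z = ∑ i, R y (b i) (J (b i)) (J z) := rfl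

theorem ricci_comm (hR : IsACT R) (b : OrthonormalBasis ι ℝ V) (y z : V) :
    hR.ricci b y z = hR.ricci b z y :=
  sum_congr rfl fun i _ => by rw [hR.pair_comm, hR.swap_swap]

theorem starRicci_comm (hR : IsACT R) {J : V →ₗ[ℝ] V} (h3 : Id3 J R) (hJ2 : ∀ x, J (J x) = -x)
    (b : OrthonormalBasis ι ℝ V) (y z : V) : hR.starRicci J b y z = hR.starRicci J b z y :=
  sum_congr rfl fun i _ => by rw [h3.apply_J_J hR hJ2, hR.pair_comm, hR.swap_swap]

theorem ricci_eq_of_basis (hR : IsACT R) (b : OrthonormalBasis ι ℝ V)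
    (c : OrthonormalBasis κ ℝ V) : hR.ricci b = hR.ricci c := by
  ext y z
  exact OrthonormalBasis.sum_bilin_diag_eq (LinearMap.mk₂ ℝ (fun x u => R x y z u)
    (fun x x' u => hR.add₁ x x' y z u) (fun t x u => hR.smul₁ t x y z u)
    (fun x u u' => hR.add₄ x y z u u') (fun t x u => hR.smul₄ t x y z u)) b c

theorem starRicci_eq_of_basis (hR : IsACT R) (J : V →ₗ[ℝ] V) (b : OrthonormalBasis ι ℝ V)
    (c : OrthonormalBasis κ ℝ V) : hR.starRicci J b = hR.starRicci J c := by
  ext y z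
  exact OrthonormalBasis.sum_bilin_diag_eq (LinearMap.mk₂ ℝ (fun x u => R y x (J u) (J z))
    (fun x x' u => hR.add₂ y x x' (J u) (J z)) (fun t x u => hR.smul₂ t y x (J u) (J z))
    (fun x u u' => by simp only [map_add, hR.add₃])
    (fun t x u => by simp only [map_smul, hR.smul₃, smul_eq_mul])) b c

end IsACT

section AdaptedBasis

variable {ι : Type*} [Fintype ι] {J : V →ₗ[ℝ] V} {R : V → V → V → V → ℝ} {ν : ℝ}

theorem OrthonormalBasis.ne_of_J_eq (hJ2 : ∀ x, J (J x) = -x)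
    (hJiso : ∀ x y, ⟪J x, J y⟫_ℝ = ⟪x, y⟫_ℝ) (c : OrthonormalBasis ι ℝ V) {a a' : ι}
    (ha : J (c a) = c a') : a ≠ a' := by
  rintro rfl
  have := inner_self_J hJ2 hJiso (c a)
  rw [ha, real_inner_self_eq_norm_sq, c.orthonormal.1 a] at this
  norm_num at this

theorem ricci_apply_self_of_J_eq (hR : IsACT R) (hν : HasConstAntiholomorphicCurvature J R ν)
    (hJ2 : ∀ x, J (J x) = -x) (hJiso : ∀ x y, ⟪J x, J y⟫_ℝ = ⟪x, y⟫_ℝ)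
    (c : OrthonormalBasis ι ℝ V) {a a' : ι} (ha : J (c a) = c a') :
    hR.ricci c (c a) (c a) = holomorphicCurvature J R (c a) + (Fintype.card ι - 2) * ν := by
  have hsplit := Fintype.sum_eq_sum_add_of_eq_off_pair (g := fun _ => ν)
    (c.ne_of_J_eq hJ2 hJiso ha) fun i hia hia' =>
      hν (c i) (c a) (c.orthonormal.1 i) (c.orthonormal.1 a) (c.orthonormal.2 hia)
        (ha ▸ c.orthonormal.2 hia')
  rw [hR.ricci_apply, hsplit, hR.self_left, ← ha, ← hR.swap_swap]
  simp only [sum_const, card_univ, nsmul_eq_mul, holomorphicCurvature]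
  ring

theorem starRicci_apply_self_of_J_eq (hR : IsACT R) (h3 : Id3 J R)
    (hν : HasConstAntiholomorphicCurvature J R ν)
    (hJ2 : ∀ x, J (J x) = -x) (hJiso : ∀ x y, ⟪J x, J y⟫_ℝ = ⟪x, y⟫_ℝ)
    (c : OrthonormalBasis ι ℝ V) {a a' : ι} (ha : J (c a) = c a') :
    hR.starRicci J c (c a) (c a) = ((Fintype.card ι - 2) * (holomorphicCurvature J R (c a) - 2 * ν)
      + 4 * holomorphicCurvature J R (c a) + ∑ i, holomorphicCurvature J R (c i)) / 6 := by
  have hsplit := Fintype.sum_eq_sum_add_of_eq_off_pair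
    (g := fun i => (holomorphicCurvature J R (c a) + holomorphicCurvature J R (c i) - 2 * ν) / 6)
    (c.ne_of_J_eq hJ2 hJiso ha) fun i hia hia' =>
      hν.apply_J_J_eq_holomorphicCurvature hR h3 hJ2 hJiso (c.orthonormal.1 a)
        (c.orthonormal.1 i) (c.orthonormal.2 (Ne.symm hia)) (by
          rw [← neg_eq_zero, ← inner_J_left hJ2 hJiso, ha, c.orthonormal.2 (Ne.symm hia')])
  have hJa : R (c a) (c a') (J (c a')) (J (c a)) = holomorphicCurvature J R (c a) := by
    rw [← ha, hJ2, hR.neg₃, ← hR.antisymm₃₄, holomorphicCurvature]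
  rw [hR.starRicci_apply, hsplit, hR.self_left, hJa, ← ha, holomorphicCurvature_J hR hJ2]
  simp only [← sum_div, sum_add_distrib, sum_sub_distrib, sum_const, card_univ, nsmul_eq_mul]
  ring

theorem ricci_combination_of_J_eq (hR : IsACT R) (h3 : Id3 J R)
    (hν : HasConstAntiholomorphicCurvature J R ν)
    (hJ2 : ∀ x, J (J x) = -x) (hJiso : ∀ x y, ⟪J x, J y⟫_ℝ = ⟪x, y⟫_ℝ) {m : ℕ}
    (c : OrthonormalBasis ι ℝ V) (hc : Fintype.card ι = 2 * m) {a a' : ι} (ha : J (c a) = c a') :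
    ((m : ℝ) + 1) * hR.ricci c (c a) (c a) - 3 * hR.starRicci J c (c a) (c a)
      = 2 * ((m : ℝ) - 1) * ((m : ℝ) + 2) * ν - (∑ i, holomorphicCurvature J R (c i)) / 2 := by
  rw [ricci_apply_self_of_J_eq hR hν hJ2 hJiso c ha,
    starRicci_apply_self_of_J_eq hR h3 hν hJ2 hJiso c ha, hc]
  push_cast
  ring

theorem ricci_combination_eq_of_antiholomorphic (hR : IsACT R) (h3 : Id3 J R)
    (hν : HasConstAntiholomorphicCurvature J R ν)
    (hJ2 : ∀ x, J (J x) = -x) (hJiso : ∀ x y, ⟪J x, J y⟫_ℝ = ⟪x, y⟫_ℝ) {m : ℕ}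
    (b : OrthonormalBasis ι ℝ V) (hb : Fintype.card ι = 2 * m) {p q : V}
    (hp : ‖p‖ = 1) (hq : ‖q‖ = 1) (hpq : ⟪p, q⟫_ℝ = 0) (hpJq : ⟪p, J q⟫_ℝ = 0) :
    ((m : ℝ) + 1) * hR.ricci b p p - 3 * hR.starRicci J b p p
      = ((m : ℝ) + 1) * hR.ricci b q q - 3 * hR.starRicci J b q q := by
  have : FiniteDimensional ℝ V := Module.Finite.of_basis b.toBasis
  have hinner := fun v w : V => inner_J_left hJ2 hJiso v w
  have hqJp : ⟪q, J p⟫_ℝ = 0 := by rw [← neg_eq_zero, ← hinner, real_inner_comm, hpJq]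
  have hv : Orthonormal ℝ ![p, J p, q, J q] := by
    rw [orthonormal_iff_ite]
    intro i j
    fin_cases i <;> fin_cases j <;>
      simp [hinner, norm_J hJiso, inner_self_J hJ2 hJiso, hJ2, hp, hq, hpq, hpJq, hqJp,
        real_inner_comm p]
  obtain ⟨u, c, hvu, hc⟩ := hv.toSubtypeRange.exists_orthonormalBasis_extension
  have hmem : ∀ k, ![p, J p, q, J q] k ∈ u := fun k => hvu (Set.mem_range_self k)
  have hcv : ∀ k, c ⟨_, hmem k⟩ = ![p, J p, q, J q] k := fun k => by rw [hc]
  have hcu : Fintype.card u = 2 * m := by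
    rw [← hb, ← Module.finrank_eq_card_basis b.toBasis, Module.finrank_eq_card_basis c.toBasis]
  have key := fun k k' (hk : J (![p, J p, q, J q] k) = ![p, J p, q, J q] k') =>
    ricci_combination_of_J_eq hR h3 hν hJ2 hJiso c hcu (a := ⟨_, hmem k⟩) (a' := ⟨_, hmem k'⟩)
      (by rw [hcv, hcv, hk])
  rw [hR.ricci_eq_of_basis b c, hR.starRicci_eq_of_basis J b c]
  have := (key 0 1 rfl).trans (key 2 3 rfl).symm
  simp only [hcv] at this
  exact this

theorem ricci_combination_eq_of_norm_eq_one (hR : IsACT R) (h3 : Id3 J R)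
    (hν : HasConstAntiholomorphicCurvature J R ν)
    (hJ2 : ∀ x, J (J x) = -x) (hJiso : ∀ x y, ⟪J x, J y⟫_ℝ = ⟪x, y⟫_ℝ) {m : ℕ} (hm : 3 ≤ m)
    (b : OrthonormalBasis ι ℝ V) (hb : Fintype.card ι = 2 * m) {p q : V}
    (hp : ‖p‖ = 1) (hq : ‖q‖ = 1) :
    ((m : ℝ) + 1) * hR.ricci b p p - 3 * hR.starRicci J b p p
      = ((m : ℝ) + 1) * hR.ricci b q q - 3 * hR.starRicci J b q q := by
  have : FiniteDimensional ℝ V := Module.Finite.of_basis b.toBasis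
  obtain ⟨w, hw, hperp⟩ := exists_norm_eq_one_forall_inner_eq_zero ![p, J p, q, J q]
    (by rw [Module.finrank_eq_card_basis b.toBasis, hb]; omega)
  have hJperp : ∀ v, ⟪J v, w⟫_ℝ = 0 → ⟪v, J w⟫_ℝ = 0 := fun v h => by
    rwa [inner_J_left hJ2 hJiso, neg_eq_zero] at h
  rw [ricci_combination_eq_of_antiholomorphic hR h3 hν hJ2 hJiso b hb hp hw (hperp 0)
      (hJperp p (hperp 1)),
    ricci_combination_eq_of_antiholomorphic hR h3 hν hJ2 hJiso b hb hq hw (hperp 2)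
      (hJperp q (hperp 3))]

end AdaptedBasis

/-- If `R` has constant antiholomorphic sectional curvature `ν`
and satisfies identity 3, then the Ricci tensor `S` and ⋆-Ricci tensor `S'`
satisfy `(m+1)S − 3S' = (1/(2m))((m+1)τ − 3τ') g`, where `τ, τ'` are the
traces of `S, S'`. -/
theorem stmt8 (m : ℕ) (hm : 3 ≤ m) (b : OrthonormalBasis (Fin (2 * m)) ℝ V)
    (J : V →ₗ[ℝ] V) (hJ2 : ∀ x, J (J x) = -x)
    (hJiso : ∀ x y, ⟪J x, J y⟫_ℝ = ⟪x, y⟫_ℝ)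
    (R : V → V → V → V → ℝ) (hR : IsACT R) (h3 : Id3 J R) (ν : ℝ)
    (hν : ∀ x y : V, ‖x‖ = 1 → ‖y‖ = 1 → ⟪x, y⟫_ℝ = 0 → ⟪x, J y⟫_ℝ = 0 →
      R x y y x = ν) :
    ∀ y z : V,
      ((m : ℝ) + 1) * (∑ i, R (b i) y z (b i))
          - 3 * (∑ i, R y (b i) (J (b i)) (J z)) =
        (1 / (2 * (m : ℝ))) *
          (((m : ℝ) + 1) * (∑ i, ∑ j, R (b j) (b i) (b i) (b j))
            - 3 * (∑ i, ∑ j, R (b i) (b j) (J (b j)) (J (b i)))) * ⟪y, z⟫_ℝ := by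
  intro y z
  set A := ((m : ℝ) + 1) • hR.ricci b - (3 : ℝ) • hR.starRicci J b
  have hA : ∀ x x', A x x' = ((m : ℝ) + 1) * (∑ i, R (b i) x x' (b i))
      - 3 * (∑ i, R x (b i) (J (b i)) (J x')) := fun _ _ => rfl
  set w := b ⟨0, by omega⟩
  have hAw : ∀ x x', A x x' = A w w * ⟪x, x'⟫_ℝ :=
    A.eq_mul_inner_of_forall_norm_eq_one
      (fun x x' => by simp only [A, LinearMap.sub_apply, LinearMap.smul_apply, hR.ricci_comm b x,
        hR.starRicci_comm h3 hJ2 b x])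
      fun x hx => ricci_combination_eq_of_norm_eq_one hR h3 hν hJ2 hJiso hm b
        (Fintype.card_fin _) hx (b.orthonormal.1 _)
  have htrace : ((m : ℝ) + 1) * (∑ i, ∑ j, R (b j) (b i) (b i) (b j))
      - 3 * (∑ i, ∑ j, R (b i) (b j) (J (b j)) (J (b i))) = 2 * m * A w w := by
    calc _ = ∑ i, A (b i) (b i) := by simp only [hA, mul_sum, sum_sub_distrib]
      _ = ∑ _i : Fin (2 * m), A w w := sum_congr rfl fun i _ => by
          rw [hAw, real_inner_self_eq_norm_sq, b.orthonormal.1 i, one_pow, mul_one]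
      _ = 2 * m * A w w := by simp
  have hm0 : (m : ℝ) ≠ 0 := by positivity
  rw [← hA, hAw, htrace]
  field_simp
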